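/- Let K ≥ 1, 0 ≤ I ≤ K with I ≥ 1 and P ≥ 1, set S = K − I, let w^t ∈ ℝ^P, Δw_1, …, Δw_K ∈ ℝ^P, and define w^{t+1} = w^t + (1/K)·Σ_{k=1}^K Δw_k, m^t = (1/P)·⟨w^t, 𝟙⟩, m^{t+1} = (1/P)·⟨w^{t+1}, 𝟙⟩, ŵ^{t+1} = w^{t+1} − (I/K)·m^{t+1}·𝟙, D_FA = ‖w^{t+1} − w^t‖, and D_FS = ‖ŵ^{t+1} − w^t‖. If m^{t+1} > 0, then D_FA² − D_FS² > 0 if and only if (K + S)/(2K) > m^t/m^{t+1}, and D_FA² − D_FS² < 0 if and only if (K + S)/(2K) < m^t/m^{t+1}. -/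

import Mathlib

open scoped RealInnerProductSpace

/-! With `v = w^{t+1} - w^t` and the shift `c = (I/K)·m^{t+1}`, expanding `‖v - c·𝟙‖²` gives
`D_FA² - D_FS² = c·(2⟨v, 𝟙⟩ - c·P) = c·P·(2(m^{t+1} - m^t) - c)`, and dividing the last factor by
`2·m^{t+1} > 0` turns it into `(K + S)/(2K) - m^t/m^{t+1}`, since `S = K - I`. -/

theorem norm_sq_sub_norm_sub_smul_sq {E : Type*} [NormedAddCommGroup E] [InnerProductSpace ℝ E]
    (v u : E) (c : ℝ) : ‖v‖ ^ 2 - ‖v - c • u‖ ^ 2 = c * (2 * ⟪v, u⟫ - c * ‖u‖ ^ 2) := by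
  rw [norm_sub_sq_real, real_inner_smul_right, norm_smul, mul_pow, Real.norm_eq_abs, sq_abs]
  ring

theorem EuclideanSpace.norm_sq_eq_card_of_forall_eq_one {ι : Type*} [Fintype ι]
    (x : EuclideanSpace ℝ ι) (hx : ∀ i, x i = 1) : ‖x‖ ^ 2 = Fintype.card ι := by
  simp [EuclideanSpace.norm_sq_eq, hx]

theorem pos_iff_and_neg_iff_of_eq_pos_mul_sub {x a y z : ℝ} (hx : x = a * (y - z)) (ha : 0 < a) :
    (x > 0 ↔ y > z) ∧ (x < 0 ↔ y < z) := by
  subst hx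
  exact ⟨(mul_pos_iff_of_pos_left ha).trans sub_pos, (smul_neg_iff_of_pos_left ha).trans sub_neg⟩

theorem fedshift_divergence_sign_general
    (P K I S : ℕ) (hK : 1 ≤ K) (hI : 1 ≤ I) (hP : 1 ≤ P)
    (hS : I + S = K)
    (wt : EuclideanSpace ℝ (Fin P))
    (ones : EuclideanSpace ℝ (Fin P)) (hones : ∀ p, ones p = 1)
    (wt1 : EuclideanSpace ℝ (Fin P))
    (mt mt1 : ℝ)
    (hmt : mt = (1 / (P : ℝ)) * ⟪wt, ones⟫)
    (hmt1 : mt1 = (1 / (P : ℝ)) * ⟪wt1, ones⟫)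
    (what1 : EuclideanSpace ℝ (Fin P))
    (hwhat1 : what1 = wt1 - (((I : ℝ) / K) * mt1) • ones)
    (DFA DFS : ℝ)
    (hDFA : DFA = ‖wt1 - wt‖)
    (hDFS : DFS = ‖what1 - wt‖)
    (hmt1pos : 0 < mt1) :
    (DFA ^ 2 - DFS ^ 2 > 0 ↔ ((K : ℝ) + S) / (2 * K) > mt / mt1) ∧
    (DFA ^ 2 - DFS ^ 2 < 0 ↔ ((K : ℝ) + S) / (2 * K) < mt / mt1) := by
  have hPpos : (0 : ℝ) < P := by exact_mod_cast hP
  have hKpos : (0 : ℝ) < K := by exact_mod_cast hK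
  have hIpos : (0 : ℝ) < I := by exact_mod_cast hI
  set c := (I : ℝ) / K * mt1
  have hshift : what1 - wt = (wt1 - wt) - c • ones := by rw [hwhat1]; abel
  have hinner : ⟪wt1 - wt, ones⟫ = P * (mt1 - mt) := by
    rw [inner_sub_left, hmt, hmt1]; field_simp
  have hdiff : DFA ^ 2 - DFS ^ 2 = 2 * P * c * mt1 * ((K + S) / (2 * K) - mt / mt1) := by
    have hSK : (S : ℝ) = K - I := by rw [← hS]; push_cast; ring
    rw [hDFA, hDFS, hshift, norm_sq_sub_norm_sub_smul_sq, hinner,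
      EuclideanSpace.norm_sq_eq_card_of_forall_eq_one ones hones, Fintype.card_fin, hSK]
    simp only [c]
    field_simp
    ring
  exact pos_iff_and_neg_iff_of_eq_pos_mul_sub hdiff (by positivity)

/-- **Sign characterization of the divergence comparison (Theorem 2 of the paper).**
If `m^{t+1} > 0`, then `D_FA² − D_FS² > 0` iff `(K+S)/(2K) > m^t/m^{t+1}`,
and `D_FA² − D_FS² < 0` iff `(K+S)/(2K) < m^t/m^{t+1}`. -/
theorem fedshift_divergence_sign
    (P K I S : ℕ) (hK : 1 ≤ K) (hI : 1 ≤ I) (hP : 1 ≤ P)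
    (hIK : I ≤ K) (hS : I + S = K)
    (wt : EuclideanSpace ℝ (Fin P))
    (Δw : Fin K → EuclideanSpace ℝ (Fin P))
    (ones : EuclideanSpace ℝ (Fin P)) (hones : ∀ p, ones p = 1)
    (wt1 : EuclideanSpace ℝ (Fin P))
    (hwt1 : wt1 = wt + (K : ℝ)⁻¹ • ∑ k, Δw k)
    (mt mt1 : ℝ)
    (hmt : mt = (1 / (P : ℝ)) * ⟪wt, ones⟫)
    (hmt1 : mt1 = (1 / (P : ℝ)) * ⟪wt1, ones⟫)
    (what1 : EuclideanSpace ℝ (Fin P))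
    (hwhat1 : what1 = wt1 - (((I : ℝ) / K) * mt1) • ones)
    (DFA DFS : ℝ)
    (hDFA : DFA = ‖wt1 - wt‖)
    (hDFS : DFS = ‖what1 - wt‖)
    (hmt1pos : 0 < mt1) :
    (DFA ^ 2 - DFS ^ 2 > 0 ↔ ((K : ℝ) + S) / (2 * K) > mt / mt1) ∧
    (DFA ^ 2 - DFS ^ 2 < 0 ↔ ((K : ℝ) + S) / (2 * K) < mt / mt1) :=
  fedshift_divergence_sign_general P K I S hK hI hP hS wt ones hones wt1 mt mt1 hmt hmt1 what1
    hwhat1 DFA DFS hDFA hDFS hmt1pos
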